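/- Let R be the valuation ring of a rank-1 valued field (K, w), with maximal ideal 𝔪. If c ∈ 𝔪 and f(X) ∈ R[[X]] satisfies f(c) = 0 (the series converges to 0 at c), then f(X) is divisible by (X − c) in R[[X]]. -/

import Mathlib

/-!
Write `Sₙ = ∑_{i<n} fᵢ cⁱ`. For `N ≥ n` the difference `S_N - Sₙ` is divisible by `cⁿ`, and
`S_N → 0`; since a principal ideal `aR` is the set of elements of valuation at least `w a`, it is
closed, so `cⁿ ∣ Sₙ`. Completeness is not needed because the cofactor is not built from the tails
of `f`: writing `Sₙ₊₁ = -cⁿ⁺¹ gₙ`, the identity `(X - c) ∑ gₙ Xⁿ = f` follows coefficientwise,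
after cancelling `cⁿ⁺¹`, from `Sₙ₊₂ - Sₙ₊₁ = fₙ₊₁ cⁿ⁺¹`.
-/

open PowerSeries Filter Set

/-- An additive rank-1 (real-valued) non-archimedean valuation on a field `K`,
with values in `EReal` (real numbers on nonzero elements, `⊤` at `0`). -/
structure AddRealValuation (K : Type*) [Field K] where
  w : K → EReal
  map_zero' : w 0 = ⊤
  finite' : ∀ x : K, x ≠ 0 → ∃ r : ℝ, w x = (r : EReal)
  map_one' : w 1 = 0
  map_mul' : ∀ x y : K, w (x * y) = w x + w y
  map_neg' : ∀ x : K, w (-x) = w x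
  add_le' : ∀ x y : K, min (w x) (w y) ≤ w (x + y)

namespace AddRealValuation

variable {K : Type*} [Field K] (v : AddRealValuation K)

/-- The valuation is non-discrete: there exist elements of arbitrarily
small positive valuation. -/
def Nondiscrete : Prop := ∀ ε : ℝ, 0 < ε → ∃ x : K, 0 < v.w x ∧ v.w x < (ε : EReal)

/-- `K` is complete with respect to `v`: every Cauchy sequence converges. -/
def IsComplete : Prop :=
  ∀ u : ℕ → K, (∀ M : ℝ, ∃ N : ℕ, ∀ m ≥ N, ∀ n ≥ N, (M : EReal) ≤ v.w (u m - u n)) →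
    ∃ L : K, ∀ M : ℝ, ∃ N : ℕ, ∀ n ≥ N, (M : EReal) ≤ v.w (u n - L)

/-- The valuation ring `R = {x : K | w x ≥ 0}` of `v`. -/
def subring : Subring K where
  carrier := {x | 0 ≤ v.w x}
  zero_mem' := by show (0:EReal) ≤ v.w 0; rw [v.map_zero']; exact le_top
  one_mem' := by show (0:EReal) ≤ v.w 1; rw [v.map_one']
  add_mem' := fun hx hy => le_trans (le_min hx hy) (v.add_le' _ _)
  mul_mem' := fun hx hy => by
    show (0:EReal) ≤ v.w _; rw [v.map_mul']; exact add_nonneg hx hy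
  neg_mem' := fun {x} hx => by show (0:EReal) ≤ v.w (-x); rw [v.map_neg']; exact hx

/-- The extension of `v` to power series over `K`: the infimum of the
valuations of the coefficients. -/
noncomputable def wS (f : PowerSeries K) : EReal := ⨅ i : ℕ, v.w (PowerSeries.coeff (R := K) i f)

/-- The extension of `v` to power series over the valuation ring `R` of `v`. -/
noncomputable def wR (f : PowerSeries v.subring) : EReal :=
  ⨅ i : ℕ, v.w ((PowerSeries.coeff (R := v.subring) i f : v.subring) : K)

/-- `f` is a convergent power series (lies in the Tate algebra `K{X}`):
the valuations of the coefficients tend to `∞`. -/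
def Conv (f : PowerSeries K) : Prop :=
  ∀ M : ℝ, ∃ N : ℕ, ∀ i ≥ N, (M : EReal) ≤ v.w (PowerSeries.coeff (R := K) i f)

/-- The series `f(c) = Σ fᵢ cⁱ` (with `f` over the valuation ring `R`) converges to `0`:
the valuations of the partial sums tend to `∞`. -/
def EvalZeroR (f : PowerSeries v.subring) (c : v.subring) : Prop :=
  ∀ M : ℝ, ∃ N : ℕ, ∀ n ≥ N,
    (M : EReal) ≤ v.w ((∑ i ∈ Finset.range n, PowerSeries.coeff (R := v.subring) i f * c ^ i : v.subring) : K)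

end AddRealValuation

/-- `𝓕` is a defining family of rank-1 valuations exhibiting the domain `D`
(with fraction field `F`) as a generalized Krull domain:
(a) for each `v ∈ 𝓕` the valuation ring of `v` is the localization of `D`
at the prime `{a : v a > 0}`; (b) `⋂ D_v = D`; (c) each nonzero `a ∈ D`
satisfies `v a = 0` for all but finitely many `v ∈ 𝓕`. -/
def IsGKFamily (D : Type*) [CommRing D] [IsDomain D] (F : Type*) [Field F]
    [Algebra D F] [IsFractionRing D F] (𝓕 : Set (AddRealValuation F)) : Prop :=
  (∀ u ∈ 𝓕, ∀ x : F, 0 ≤ u.w x ↔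
    ∃ a b : D, b ≠ 0 ∧ ¬ 0 < u.w (algebraMap D F b) ∧ x * algebraMap D F b = algebraMap D F a) ∧
  (∀ x : F, (∀ u ∈ 𝓕, 0 ≤ u.w x) → ∃ a : D, x = algebraMap D F a) ∧
  (∀ a : D, a ≠ 0 → {u ∈ 𝓕 | u.w (algebraMap D F a) ≠ 0}.Finite)

namespace PowerSeries

open Finset

variable {A : Type*} [CommRing A]

theorem pow_dvd_sum_range_mul_pow_sub (a : ℕ → A) (c : A) {n N : ℕ} (h : n ≤ N) :
    c ^ n ∣ ∑ i ∈ range N, a i * c ^ i - ∑ i ∈ range n, a i * c ^ i := by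
  rw [← sum_Ico_eq_sub _ h]
  exact dvd_sum fun i hi => (pow_dvd_pow c (mem_Ico.1 hi).1).mul_left _

theorem X_sub_C_dvd_of_forall_pow_dvd [IsDomain A] {f : A⟦X⟧} {c : A}
    (h : ∀ n, c ^ n ∣ ∑ i ∈ range n, coeff i f * c ^ i) : X - C c ∣ f := by
  rcases eq_or_ne c 0 with rfl | hc
  · have hf₀ : constantCoeff f = 0 := by simpa using h 1
    simpa using X_dvd_iff.2 hf₀
  choose g hg using fun n => h (n + 1)
  refine ⟨mk fun n => -g n, ext fun n => ?_⟩
  rcases n with _ | n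
  · simpa [sub_mul, coeff_zero_eq_constantCoeff] using hg 0
  · apply mul_left_cancel₀ (pow_ne_zero (n + 1) hc)
    have hsucc := hg (n + 1)
    rw [sum_range_succ, hg n, pow_succ] at hsucc
    simp only [sub_mul, map_sub, coeff_succ_X_mul, coeff_C_mul, coeff_mk]
    linear_combination hsucc

end PowerSeries

namespace AddRealValuation

variable {K : Type*} [Field K] (v : AddRealValuation K)

theorem eq_zero_of_forall_le_w {x : K} (h : ∀ M : ℝ, (M : EReal) ≤ v.w x) : x = 0 := by
  by_contra hx
  obtain ⟨r, hr⟩ := v.finite' x hx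
  have := h (r + 1)
  rw [hr, EReal.coe_le_coe_iff] at this
  linarith

theorem dvd_of_w_le {a b : v.subring} (ha : a ≠ 0) (h : v.w a ≤ v.w b) : a ∣ b := by
  have ha' : (a : K) ≠ 0 := by exact_mod_cast ha
  have hmem : (b : K) * (a : K)⁻¹ ∈ v.subring := by
    show 0 ≤ v.w _
    calc (0 : EReal) = v.w a + v.w (a : K)⁻¹ := by
          rw [← v.map_mul', mul_inv_cancel₀ ha', v.map_one']
      _ ≤ v.w b + v.w (a : K)⁻¹ := by gcongr
      _ = v.w ((b : K) * (a : K)⁻¹) := (v.map_mul' _ _).symm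
  exact ⟨⟨_, hmem⟩, Subtype.ext (by push_cast; field_simp)⟩

theorem dvd_of_forall_exists_dvd_sub {a s : v.subring}
    (h : ∀ M : ℝ, ∃ y : v.subring, a ∣ y - s ∧ (M : EReal) ≤ v.w y) : a ∣ s := by
  rcases eq_or_ne a 0 with rfl | ha
  · suffices (s : K) = 0 by rw [show s = 0 by exact_mod_cast this]
    refine v.eq_zero_of_forall_le_w fun M => ?_
    obtain ⟨y, hys, hy⟩ := h M
    rwa [← sub_eq_zero.1 (zero_dvd_iff.1 hys)]
  obtain ⟨r, hr⟩ := v.finite' a (by exact_mod_cast ha)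
  obtain ⟨y, hys, hy⟩ := h r
  rw [← sub_sub_cancel y s]
  exact dvd_sub (v.dvd_of_w_le ha (hr ▸ hy)) hys

theorem pow_dvd_sum_of_evalZeroR {f : PowerSeries v.subring} {c : v.subring}
    (heval : v.EvalZeroR f c) (n : ℕ) :
    c ^ n ∣ ∑ i ∈ Finset.range n, PowerSeries.coeff i f * c ^ i := by
  refine v.dvd_of_forall_exists_dvd_sub fun M => ?_
  obtain ⟨N, hN⟩ := heval M
  exact ⟨_, PowerSeries.pow_dvd_sum_range_mul_pow_sub _ c (le_max_right N n),
    hN _ (le_max_left N n)⟩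

end AddRealValuation

theorem statement2_general {K : Type*} [Field K] (v : AddRealValuation K)
    (c : v.subring)
    (f : PowerSeries v.subring) (heval : v.EvalZeroR f c) :
    ∃ g : PowerSeries v.subring,
      f = (PowerSeries.X - PowerSeries.C (R := v.subring) c) * g :=
  PowerSeries.X_sub_C_dvd_of_forall_pow_dvd (v.pow_dvd_sum_of_evalZeroR heval)

/-- If `c` lies in the maximal ideal `𝔪` of the valuation ring `R`
and `f ∈ R[[X]]` satisfies `f(c) = 0` (the series converges to `0` at `c`),
then `(X - c)` divides `f` in `R[[X]]`. -/
theorem statement2 {K : Type*} [Field K] (v : AddRealValuation K)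
    (c : v.subring) (hc : 0 < v.w (c : K))
    (f : PowerSeries v.subring) (heval : v.EvalZeroR f c) :
    ∃ g : PowerSeries v.subring,
      f = (PowerSeries.X - PowerSeries.C (R := v.subring) c) * g :=
  statement2_general v c f heval
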